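/- Let K be a proper cone in a finite-dimensional real Hilbert space V and let L be a linear transformation on V. Then the following are equivalent: (1) L has the 𝒵-property relative to K and L(K) ⊆ K; (2) L + tI is an automorphism of K (i.e., L + tI is invertible and (L + tI)(K) = K) for all t > 0. -/

import Mathlib

/-!
(1) ⇒ (2): the point is that `L x + t • x ∈ K` forces `x ∈ K`. Otherwise push `x` along an
interior point `e` until it reaches the boundary of `K` at `v = x + μ • e` (`μ > 0`), and take a
supporting `y ∈ K*` with `⟪v, y⟫ = 0`, positive on the interior. The `𝒵`-property gives
`⟪L v + t • v, y⟫ = ⟪L v, y⟫ ≤ 0`, whereas `L v + t • v = (L x + t • x) + μ • (L e + t • e)`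
pairs strictly positively with `y` because `L e ∈ K`. Since `K` is pointed, `L + t • id` is then
injective, hence bijective, and its inverse maps `K` into `K`.

(2) ⇒ (1): `L (K) ⊆ K` follows by letting `t → 0⁺` in `L x + t • x ∈ K`. For the `𝒵`-property
write `x = L u + t • u` with `u ∈ K`; then `⟪L u, y⟫ = -t ⟪u, y⟫ ≤ 0`, so
`⟪L x, y⟫ ≤ ⟪L (L u), y⟫`, which is `O(1/t)` because `‖u‖ ≤ ‖x‖ / (t - ‖L‖)`.
-/

open scoped RealInnerProductSpace

/-- A proper cone in a finite-dimensional real Hilbert space: a topologically closed,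
pointed convex cone with nonempty interior. -/
def IsProperCone {V : Type*} [NormedAddCommGroup V] [InnerProductSpace ℝ V]
    (K : Set V) : Prop :=
  IsClosed K ∧ (∀ x ∈ K, ∀ y ∈ K, x + y ∈ K) ∧
    (∀ (c : ℝ), 0 ≤ c → ∀ x ∈ K, c • x ∈ K) ∧
    (∀ x ∈ K, -x ∈ K → x = 0) ∧ (interior K).Nonempty

/-- `L` has the `𝒵`-property relative to `K`: for `x ∈ K`, `y ∈ K*` with `⟪x, y⟫ = 0`
one has `⟪L x, y⟫ ≤ 0`. -/
def HasZProperty {V : Type*} [NormedAddCommGroup V] [InnerProductSpace ℝ V]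
    (K : Set V) (L : V →ₗ[ℝ] V) : Prop :=
  ∀ x ∈ K, ∀ y : V, (∀ z ∈ K, 0 ≤ ⟪y, z⟫) → ⟪x, y⟫ = 0 → ⟪L x, y⟫ ≤ 0

open Set Filter Topology Function

section

variable {V : Type*} [NormedAddCommGroup V] [InnerProductSpace ℝ V]

theorem PointedCone.exists_dual_inner_eq_zero_of_notMem_interior [CompleteSpace V]
    {C : PointedCone ℝ V} {v : V} (hv : v ∈ C) (hv' : v ∉ interior (C : Set V))
    (hC : (interior (C : Set V)).Nonempty) :
    ∃ y : V, (∀ z ∈ C, 0 ≤ ⟪y, z⟫) ∧ ⟪v, y⟫ = 0 ∧ ∀ a ∈ interior (C : Set V), 0 < ⟪y, a⟫ := by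
  obtain ⟨f, hf0, hf⟩ := geometric_hahn_banach_of_nonempty_interior_point C.convex hv' hC
  have hfv : f v = 0 := by
    have h0 := hf 0 C.zero_mem
    have h2 := hf ((2 : ℝ) • v) (C.smul_mem zero_le_two hv)
    rw [map_zero] at h0
    rw [map_smul, smul_eq_mul] at h2
    linarith
  -- `f` is an open map, so it cannot attain its maximum `0` on the open set `interior C`.
  have hfint : ∀ a ∈ interior (C : Set V), f a < 0 := by
    have : f '' interior (C : Set V) ⊆ interior (Iic 0) :=
      interior_maximal (image_subset_iff.2 fun a ha => hfv ▸ hf a (interior_subset ha))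
        (f.isOpenMap_of_ne_zero hf0 _ isOpen_interior)
    rw [interior_Iic] at this
    exact fun a ha => this (mem_image_of_mem f ha)
  refine ⟨(InnerProductSpace.toDual ℝ V).symm (-f), fun z hz => ?_, ?_, fun a ha => ?_⟩
  · simpa [InnerProductSpace.toDual_symm_apply] using hfv ▸ hf z hz
  · rw [real_inner_comm, InnerProductSpace.toDual_symm_apply]
    simp [hfv]
  · simpa [InnerProductSpace.toDual_symm_apply] using hfint a ha

theorem PointedCone.exists_pos_add_smul_mem_notMem_interior {C : PointedCone ℝ V}
    (hC : IsClosed (C : Set V)) {e x : V} (he : e ∈ interior (C : Set V)) (hx : x ∉ C) :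
    ∃ μ : ℝ, 0 < μ ∧ x + μ • e ∈ C ∧ x + μ • e ∉ interior (C : Set V) := by
  set M : Set ℝ := {μ | x + μ • e ∈ C}
  have hM_closed : IsClosed M := hC.preimage (by fun_prop)
  have hM_mono : ∀ μ ∈ M, ∀ μ', μ ≤ μ' → μ' ∈ M := fun μ hμ μ' hle => by
    simpa [M, add_assoc, ← add_smul] using
      C.add_mem hμ (C.smul_mem (sub_nonneg.2 hle) (interior_subset he))
  have hM_pos : ∀ μ ∈ M, 0 < μ := fun μ hμ => by
    by_contra! h
    exact hx (by simpa [M] using hM_mono μ hμ 0 h)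
  have hM_ne : M.Nonempty := by
    have : ∀ᶠ s : ℝ in 𝓝 0, e + s • x ∈ C :=
      ((continuous_const.add (continuous_id.smul continuous_const)).tendsto' 0 e
        (by simp)).eventually (mem_interior_iff_mem_nhds.1 he)
    obtain ⟨s, hsC, hs⟩ := (this.filter_mono nhdsWithin_le_nhds |>.and
      (self_mem_nhdsWithin (s := Ioi 0))).exists
    refine ⟨s⁻¹, ?_⟩
    simpa [M, smul_add, smul_smul, inv_mul_cancel₀ (ne_of_gt hs), add_comm] using
      C.smul_mem (inv_nonneg.2 (le_of_lt hs)) hsC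
  have hM_bdd : BddBelow M := ⟨0, fun μ hμ => le_of_lt (hM_pos μ hμ)⟩
  refine ⟨sInf M, hM_pos _ (hM_closed.csInf_mem hM_ne hM_bdd),
    hM_closed.csInf_mem hM_ne hM_bdd, fun hint => ?_⟩
  -- Membership in the interior is an open condition on `μ`, so it would persist below `sInf M`.
  have : ∀ᶠ μ in 𝓝 (sInf M), x + μ • e ∈ interior (C : Set V) :=
    (isOpen_interior.preimage (by fun_prop)).mem_nhds hint
  obtain ⟨μ, hμ, hμM⟩ := this.exists_lt
  exact (csInf_le hM_bdd (show μ ∈ M from interior_subset (s := (C : Set V)) hμM)).not_gt hμ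

theorem PointedCone.mem_of_add_smul_mem_of_hasZProperty [CompleteSpace V] {C : PointedCone ℝ V}
    (hC : IsClosed (C : Set V)) (hC' : (interior (C : Set V)).Nonempty) {L : V →ₗ[ℝ] V}
    (hZ : HasZProperty C L) (hL : MapsTo L C C) {t : ℝ} (ht : 0 < t) {x : V}
    (hx : L x + t • x ∈ C) : x ∈ C := by
  obtain ⟨e, he⟩ := hC'
  by_contra hxC
  obtain ⟨μ, hμ, hv, hv'⟩ := exists_pos_add_smul_mem_notMem_interior hC he hxC
  obtain ⟨y, hyC, hvy, hye⟩ := exists_dual_inner_eq_zero_of_notMem_interior hv hv' ⟨e, he⟩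
  have hdecomp : L (x + μ • e) + t • (x + μ • e) = (L x + t • x) + μ • (L e + t • e) := by
    simp only [map_add, map_smul]
    module
  have hle : ⟪y, L (x + μ • e) + t • (x + μ • e)⟫ ≤ 0 := by
    rw [inner_add_right, real_inner_smul_right, real_inner_comm (x + μ • e) y, hvy, mul_zero,
      add_zero, real_inner_comm]
    exact hZ _ hv y hyC hvy
  have hpos : 0 < ⟪y, (L x + t • x) + μ • (L e + t • e)⟫ := by
    rw [inner_add_right, real_inner_smul_right]
    refine add_pos_of_nonneg_of_pos (hyC _ hx) (mul_pos hμ ?_)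
    rw [inner_add_right, real_inner_smul_right]
    exact add_pos_of_nonneg_of_pos (hyC _ (hL (interior_subset he))) (mul_pos ht (hye e he))
  rw [hdecomp] at hle
  exact hpos.not_ge hle

theorem ContinuousLinearMap.norm_le_div_of_apply_add_smul_eq {E : Type*} [NormedAddCommGroup E]
    [NormedSpace ℝ E] (A : E →L[ℝ] E) {t : ℝ} (ht : ‖A‖ < t) {u x : E}
    (h : A u + t • u = x) : ‖u‖ ≤ ‖x‖ / (t - ‖A‖) := by
  have ht0 : 0 < t := (norm_nonneg A).trans_lt ht
  have : t * ‖u‖ ≤ ‖x‖ + ‖A‖ * ‖u‖ := calc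
    t * ‖u‖ = ‖x - A u‖ := by rw [← h, add_sub_cancel_left, norm_smul, Real.norm_of_nonneg ht0.le]
    _ ≤ ‖x‖ + ‖A u‖ := norm_sub_le _ _
    _ ≤ ‖x‖ + ‖A‖ * ‖u‖ := by gcongr; exact A.le_opNorm u
  rw [le_div_iff₀ (sub_pos.2 ht)]
  linarith

theorem hasZProperty_of_forall_exists_add_smul_eq [FiniteDimensional ℝ V] {K : Set V}
    {L : V →ₗ[ℝ] V} (h : ∀ t : ℝ, 0 < t → ∀ x ∈ K, ∃ u ∈ K, L u + t • u = x) :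
    HasZProperty K L := by
  intro x hx y hy hxy
  set A := LinearMap.toContinuousLinearMap L
  have key : ∀ t, ‖A‖ < t → ⟪L x, y⟫ ≤ ‖A‖ ^ 2 * (‖x‖ / (t - ‖A‖)) * ‖y‖ := by
    intro t ht
    have ht0 : 0 < t := (norm_nonneg A).trans_lt ht
    obtain ⟨u, hu, rfl⟩ := h t ht0 x hx
    have hLu : ⟪L u, y⟫ ≤ 0 := by
      rw [inner_add_left, real_inner_smul_left] at hxy
      nlinarith [hy u hu, real_inner_comm u y]
    calc ⟪L (L u + t • u), y⟫ = ⟪A (A u), y⟫ + t * ⟪L u, y⟫ := by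
          rw [map_add, map_smul, inner_add_left, real_inner_smul_left]; rfl
      _ ≤ ‖A (A u)‖ * ‖y‖ := by nlinarith [real_inner_le_norm (A (A u)) y]
      _ ≤ ‖A‖ ^ 2 * ‖u‖ * ‖y‖ := by
          gcongr
          calc ‖A (A u)‖ ≤ ‖A‖ * ‖A u‖ := A.le_opNorm _
            _ ≤ ‖A‖ * (‖A‖ * ‖u‖) := by gcongr; exact A.le_opNorm u
            _ = ‖A‖ ^ 2 * ‖u‖ := by ring
      _ ≤ ‖A‖ ^ 2 * (‖L u + t • u‖ / (t - ‖A‖)) * ‖y‖ := by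
          gcongr
          exact A.norm_le_div_of_apply_add_smul_eq ht rfl
  have hlim : Tendsto (fun t => ‖A‖ ^ 2 * (‖x‖ / (t - ‖A‖)) * ‖y‖) atTop (𝓝 0) := by
    simpa [sub_eq_add_neg] using ((tendsto_const_nhds.div_atTop
      (tendsto_atTop_add_const_right _ (-‖A‖) tendsto_id)).const_mul (‖A‖ ^ 2)).mul_const ‖y‖
  exact ge_of_tendsto hlim ((eventually_gt_atTop ‖A‖).mono key)

theorem mapsTo_of_forall_add_smul_mem [FiniteDimensional ℝ V] {K : Set V} (hK : IsClosed K)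
    {L : V →ₗ[ℝ] V} (h : ∀ t : ℝ, 0 < t → ∀ x ∈ K, L x + t • x ∈ K) : MapsTo L K K := by
  intro x hx
  have : Tendsto (fun t : ℝ => L x + t • x) (𝓝[>] 0) (𝓝 (L x)) :=
    ((continuous_const.add (continuous_id.smul continuous_const)).tendsto' 0 _
      (by simp)).mono_left nhdsWithin_le_nhds
  exact hK.mem_of_tendsto this (eventually_nhdsWithin_of_forall fun t ht => h t ht x hx)

def IsProperCone.toPointedCone {K : Set V} (hK : IsProperCone K) : PointedCone ℝ V where
  carrier := K
  add_mem' hx hy := hK.2.1 _ hx _ hy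
  zero_mem' := by
    obtain ⟨e, he⟩ := hK.2.2.2.2
    simpa using hK.2.2.1 0 le_rfl e (interior_subset he)
  smul_mem' c x hx := hK.2.2.1 c c.2 x hx

theorem IsProperCone.bijective_and_image_eq_of_hasZProperty [FiniteDimensional ℝ V]
    {K : Set V} (hK : IsProperCone K) {L : V →ₗ[ℝ] V} (hZ : HasZProperty K L)
    (hL : MapsTo L K K) {t : ℝ} (ht : 0 < t) :
    Bijective (L + t • (LinearMap.id : V →ₗ[ℝ] V)) ∧
      (L + t • (LinearMap.id : V →ₗ[ℝ] V)) '' K = K := by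
  obtain ⟨hK_closed, hK_add, hK_smul, hK_pointed, hK_int⟩ := id hK
  set T : V →ₗ[ℝ] V := L + t • LinearMap.id
  have hT : ∀ x, T x = L x + t • x := fun x => rfl
  have hpre : ∀ x, T x ∈ K → x ∈ K := fun x hx =>
    hK.toPointedCone.mem_of_add_smul_mem_of_hasZProperty hK_closed hK_int hZ hL ht (hT x ▸ hx)
  have hinj : Injective T := by
    refine (injective_iff_map_eq_zero T).2 fun x hx => hK_pointed x ?_ ?_
    · exact hpre x (hx ▸ hK.toPointedCone.zero_mem)
    · exact hpre (-x) (by rw [map_neg, hx, neg_zero]; exact hK.toPointedCone.zero_mem)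
  have hsurj : Surjective T := LinearMap.injective_iff_surjective.1 hinj
  refine ⟨⟨hinj, hsurj⟩, Subset.antisymm ?_ fun z hz => ?_⟩
  · rintro _ ⟨x, hx, rfl⟩
    exact hK_add _ (hL hx) _ (hK_smul t ht.le x hx)
  · obtain ⟨x, rfl⟩ := hsurj z
    exact ⟨x, hpre x hz, rfl⟩

end

theorem stmt_8 {V : Type*} [NormedAddCommGroup V] [InnerProductSpace ℝ V]
    [FiniteDimensional ℝ V] (K : Set V) (hK : IsProperCone K) (L : V →ₗ[ℝ] V) :
    (HasZProperty K L ∧ ∀ x ∈ K, L x ∈ K) ↔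
      (∀ t : ℝ, 0 < t →
        Function.Bijective (L + t • (LinearMap.id : V →ₗ[ℝ] V)) ∧
        (L + t • (LinearMap.id : V →ₗ[ℝ] V)) '' K = K) := by
  refine ⟨fun ⟨hZ, hL⟩ t ht => hK.bijective_and_image_eq_of_hasZProperty hZ hL ht, fun h => ?_⟩
  have hsub : ∀ t : ℝ, 0 < t → ∀ x ∈ K, ∃ u ∈ K, L u + t • u = x := fun t ht x hx => by
    simpa using (h t ht).2.symm.subset hx
  have hmem : ∀ t : ℝ, 0 < t → ∀ x ∈ K, L x + t • x ∈ K := fun t ht x hx => by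
    simpa using (h t ht).2.subset (mem_image_of_mem _ hx)
  exact ⟨hasZProperty_of_forall_exists_add_smul_eq hsub, mapsTo_of_forall_add_smul_mem hK.1 hmem⟩
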